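/- arXiv:1810.11082 — 2 statements merged into one kernel-verified Lean document; each statement's English description precedes it below -/
import Mathlib

section
/- (Singular matrix perturbation, leading term) Let D̂ = F₀ + εD with F₀ symmetric and singular. Let P be the orthogonal projection onto the nullspace of F₀ and Q = I - P. Assume PᵀDP is invertible on the range of P and QᵀF₀Q is invertible on the range of Q. Let E_P = P(PᵀDP)^{-1}Pᵀ and E_Q = Q(QᵀF₀Q)^{-1}Qᵀ. Then for all sufficiently small ε > 0, D̂ is invertible and D̂^{-1} = (1/ε)E_P + (I - E_P D)E_Q(I - D E_P) + O(ε). -/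
/-!
Put `B = (1 - E_P D) E_Q (1 - D E_P)`. The projection identities give `F₀ E_P = 0` and
`F₀ B + D E_P = 1`, hence `(F₀ + εD)(ε⁻¹E_P + B) = 1 + ε DB`, and `1 + ε DB` is a unit for small
`ε`. Since `E_P D` is idempotent, `E_P D B = 0`, so the error
`(ε⁻¹E_P + B)((1 + ε DB)⁻¹ - 1) = -ε BDB (1 + ε DB)⁻¹` is `O(ε)`: the singular term `ε⁻¹E_P`
never multiplies the perturbation.
-/

open Matrix

attribute [local instance] Matrix.linftyOpNormedAddCommGroup Matrix.linftyOpNormedRing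
attribute [local instance] Matrix.linftyOpNormedAlgebra

open Filter Topology Asymptotics

section Algebraic

variable {𝕜 R : Type*} [Field 𝕜] [Ring R] [Algebra 𝕜 R]

theorem add_smul_mul_inv_smul_add {A D E B : R} (hAE : A * E = 0) (hAB : A * B + D * E = 1)
    {ε : 𝕜} (hε : ε ≠ 0) : (A + ε • D) * (ε⁻¹ • E + B) = 1 + ε • (D * B) := by
  simp only [add_mul, mul_add, mul_smul_comm, smul_mul_assoc, hAE, zero_add, smul_smul,
    inv_mul_cancel₀ hε, one_smul]
  rw [← hAB]
  abel

theorem inv_smul_add_mul_eq {E B M : R} (hEM : E * M = 0) (ε : 𝕜) :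
    (ε⁻¹ • E + B) * M = B * M := by
  rw [add_mul, smul_mul_assoc, hEM, smul_zero, zero_add]

end Algebraic

section Perturbation

variable {𝕜 R : Type*} [NontriviallyNormedField 𝕜] [NormedRing R] [HasSummableGeomSeries R]
  [NormedAlgebra 𝕜 R]

theorem eventually_isUnit_one_add_smul (M : R) : ∀ᶠ ε : 𝕜 in 𝓝 0, IsUnit (1 + ε • M) := by
  have hcont : Continuous fun ε : 𝕜 => 1 + ε • M := by fun_prop
  have h0 : IsUnit (1 + (0 : 𝕜) • M) := by simp
  exact (Units.isOpen.preimage hcont).mem_nhds h0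

theorem isBigO_inverse_one_add_smul (M : R) :
    (fun ε : 𝕜 => Ring.inverse (1 + ε • M)) =O[𝓝 0] fun _ => (1 : ℝ) := by
  have hlim : Tendsto (fun ε : 𝕜 => ε • M) (𝓝 0) (𝓝 0) := by
    simpa using (tendsto_id (x := 𝓝 (0 : 𝕜))).smul_const M
  simpa only [Function.comp_def, Units.val_one] using
    (NormedRing.inverse_add_norm (1 : Rˣ)).comp_tendsto hlim

theorem exists_rightInverse_sub_isBigO {A D E B : R} (hAE : A * E = 0)
    (hAB : A * B + D * E = 1) (hEDB : E * D * B = 0) :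
    ∃ Y : 𝕜 → R, (∀ᶠ ε in 𝓝[≠] 0, (A + ε • D) * Y ε = 1) ∧
      (fun ε => Y ε - (ε⁻¹ • E + B)) =O[𝓝[≠] 0] fun ε => ε := by
  set M := D * B
  have hEM : E * M = 0 := by rw [← mul_assoc, hEDB]
  set V := fun ε : 𝕜 => Ring.inverse (1 + ε • M)
  have hV : ∀ᶠ ε : 𝕜 in 𝓝 0, (1 + ε • M) * V ε = 1 :=
    (eventually_isUnit_one_add_smul M).mono fun ε h => Ring.mul_inverse_cancel _ h
  refine ⟨fun ε => (ε⁻¹ • E + B) * V ε, ?_, ?_⟩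
  · filter_upwards [nhdsWithin_le_nhds hV, self_mem_nhdsWithin] with ε hε hε0
    rw [← mul_assoc, add_smul_mul_inv_smul_add hAE hAB hε0, hε]
  · have hdiff : (fun ε => -(ε • (B * M * V ε))) =ᶠ[𝓝 0]
        fun ε => (ε⁻¹ • E + B) * V ε - (ε⁻¹ • E + B) := by
      filter_upwards [hV] with ε hε
      have hV1 : V ε - 1 = -(ε • M * V ε) := by
        rw [← hε, add_mul, one_mul]
        abel
      rw [← mul_sub_one, hV1, mul_neg, smul_mul_assoc, mul_smul_comm, ← mul_assoc (ε⁻¹ • E + B),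
        inv_smul_add_mul_eq hEM]
    have hbdd : (fun ε : 𝕜 => B * M * V ε) =O[𝓝 0] fun _ => (1 : 𝕜) :=
      ((isBigO_inverse_one_add_smul M).const_mul_left (B * M)).trans
        (isBigO_const_const _ one_ne_zero _)
    have hO : (fun ε => -(ε • (B * M * V ε))) =O[𝓝 0] fun ε => ε := by
      simpa only [smul_eq_mul, mul_one] using ((isBigO_refl (fun ε : 𝕜 => ε) _).smul hbdd).neg_left
    exact (hO.congr' hdiff EventuallyEq.rfl).mono nhdsWithin_le_nhds

end Perturbation

theorem exists_pos_forall_of_isBigO {E : Type*} [Norm E] {p : ℝ → Prop} {f : ℝ → E}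
    (hp : ∀ᶠ ε in 𝓝[≠] 0, p ε) (hf : f =O[𝓝[≠] 0] fun ε => ε) :
    ∃ C > 0, ∃ ε₀ > 0, ∀ ε : ℝ, 0 < ε → ε < ε₀ → p ε ∧ ‖f ε‖ ≤ C * ε := by
  obtain ⟨C, hC, hCf⟩ := hf.exists_pos
  obtain ⟨ε₀, hε₀, h⟩ :=
    Metric.eventually_nhds_iff.1 (eventually_nhdsWithin_iff.1 (hp.and hCf.bound))
  refine ⟨C, hC, ε₀, hε₀, fun ε hε hεε₀ => ?_⟩
  obtain ⟨hpε, hfε⟩ := h (by rwa [Real.dist_0_eq_abs, abs_of_pos hε]) hε.ne'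
  exact ⟨hpε, by rwa [Real.norm_of_nonneg hε.le] at hfε⟩

section Compression

variable {R : Type*} [Ring R] {F D P E G : R}

theorem mul_eq_one_sub_of_compression (hFP : F * P = 0) (hPF : P * F = 0)
    (hG : (1 - P) * F * (1 - P) * G = 1 - P) : F * G = 1 - P := by
  rwa [sub_mul, one_mul, hPF, sub_zero, mul_sub, mul_one, hFP, sub_zero] at hG

theorem mul_mul_eq_of_compression (hPE : P * E = E) (hE : P * D * P * E = P) :
    P * D * E = P := by
  rw [← hPE, ← mul_assoc, hE]

theorem isIdempotentElem_mul_of_compression (hPE : P * E = E) (hE : P * D * P * E = P)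
    (hEP : E * P = E) : IsIdempotentElem (E * D) := by
  have hEDE : E * D * E = E :=
    calc E * D * E = E * (P * D * P * E) := by
          simp only [← mul_assoc, hEP]
          rw [mul_assoc (E * D), hPE]
      _ = E := by rw [hE, hEP]
  rw [IsIdempotentElem, ← mul_assoc, hEDE]

theorem mul_correction_add_mul_eq_one (hPE : P * E = E) (hE : P * D * P * E = P)
    (hFE : F * E = 0) (hFG : F * G = 1 - P) :
    F * ((1 - E * D) * G * (1 - D * E)) + D * E = 1 := by
  have hF : F * (1 - E * D) = F := by rw [mul_sub, mul_one, ← mul_assoc, hFE, zero_mul, sub_zero]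
  rw [← mul_assoc, ← mul_assoc, hF, hFG, sub_mul, one_mul, mul_sub, mul_one, ← mul_assoc P,
    mul_mul_eq_of_compression hPE hE]
  abel

theorem mul_mul_correction_eq_zero (h : IsIdempotentElem (E * D)) :
    E * D * ((1 - E * D) * G * (1 - D * E)) = 0 := by
  rw [← mul_assoc, ← mul_assoc, h.mul_one_sub_self, zero_mul, zero_mul]

end Compression

theorem Matrix.mul_eq_zero_of_fixed_mulVec_eq_zero {m n α : Type*} [Fintype n] [CommRing α]
    {F : Matrix m n α} {P : Matrix n n α} (hP : P * P = P)
    (h : ∀ x, P *ᵥ x = x → F *ᵥ x = 0) : F * P = 0 :=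
  ext_iff_mulVec.2 fun x => by rw [← mulVec_mulVec, zero_mulVec, h]; rw [mulVec_mulVec, hP]

theorem stmt_5_general {n : ℕ} (F₀ D P Q EP EQ : Matrix (Fin n) (Fin n) ℝ)
    (hF₀sym : F₀.IsSymm)
    (hPproj : P * P = P) (hPsym : Pᵀ = P) (hQ : Q = 1 - P)
    (hker : ∀ x : Fin n → ℝ, F₀ *ᵥ x = 0 ↔ P *ᵥ x = x)
    -- `EP` inverts `PᵀDP` on the range of `P`:
    (hEP₂ : (Pᵀ * D * P) * EP = P)
    (hEP₃ : P * EP = EP) (hEP₄ : EP * Pᵀ = EP)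
    -- `EQ` inverts `QᵀF₀Q` on the range of `Q`:
    (hEQ₂ : (Qᵀ * F₀ * Q) * EQ = Q) :
    ∃ C > 0, ∃ ε₀ > 0, ∀ ε : ℝ, 0 < ε → ε < ε₀ →
      IsUnit (F₀ + ε • D) ∧
      ‖(F₀ + ε • D)⁻¹ -
        ((1 / ε) • EP + (1 - EP * D) * EQ * (1 - D * EP))‖ ≤ C * ε := by
  subst hQ
  rw [hPsym] at hEP₂ hEP₄
  rw [transpose_sub, transpose_one, hPsym] at hEQ₂
  have hFP : F₀ * P = 0 := mul_eq_zero_of_fixed_mulVec_eq_zero hPproj fun x => (hker x).2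
  have hPF : P * F₀ = 0 := by rw [← hPsym, ← hF₀sym.eq, ← transpose_mul, hFP, transpose_zero]
  have hFE : F₀ * EP = 0 := by rw [← hEP₃, ← mul_assoc, hFP, zero_mul]
  have hFG := mul_eq_one_sub_of_compression hFP hPF hEQ₂
  obtain ⟨Y, hY, hYO⟩ := exists_rightInverse_sub_isBigO (𝕜 := ℝ) hFE
    (mul_correction_add_mul_eq_one hEP₃ hEP₂ hFE hFG)
    (mul_mul_correction_eq_zero (isIdempotentElem_mul_of_compression hEP₃ hEP₂ hEP₄))
  obtain ⟨C, hC, ε₀, hε₀, h⟩ := exists_pos_forall_of_isBigO hY hYO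
  refine ⟨C, hC, ε₀, hε₀, fun ε hε hεε₀ => ?_⟩
  obtain ⟨hYε, hnorm⟩ := h ε hε hεε₀
  refine ⟨IsUnit.of_mul_eq_one _ hYε, ?_⟩
  rw [inv_eq_right_inv hYε, one_div]
  exact hnorm

/-- Singular matrix perturbation, leading term.  `D̂ = F₀ + εD` with `F₀`
symmetric and singular, `P` the orthogonal projection onto `ker F₀`, `Q = I - P`,
`E_P = P(PᵀDP)⁻¹Pᵀ` (encoded by its defining properties on the range of `P`) and
`E_Q = Q(QᵀF₀Q)⁻¹Qᵀ`.  Then for all sufficiently small `ε > 0`, `D̂` is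
invertible and `D̂⁻¹ = (1/ε)E_P + (I - E_P D)E_Q(I - D E_P) + O(ε)`. -/
theorem stmt_5 {n : ℕ} (F₀ D P Q EP EQ : Matrix (Fin n) (Fin n) ℝ)
    (hF₀sym : F₀.IsSymm) (hF₀sing : ¬ IsUnit F₀)
    (hPproj : P * P = P) (hPsym : Pᵀ = P) (hQ : Q = 1 - P)
    (hker : ∀ x : Fin n → ℝ, F₀ *ᵥ x = 0 ↔ P *ᵥ x = x)
    -- `EP` inverts `PᵀDP` on the range of `P`:
    (hEP₁ : EP * (Pᵀ * D * P) = P) (hEP₂ : (Pᵀ * D * P) * EP = P)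
    (hEP₃ : P * EP = EP) (hEP₄ : EP * Pᵀ = EP)
    -- `EQ` inverts `QᵀF₀Q` on the range of `Q`:
    (hEQ₁ : EQ * (Qᵀ * F₀ * Q) = Q) (hEQ₂ : (Qᵀ * F₀ * Q) * EQ = Q)
    (hEQ₃ : Q * EQ = EQ) (hEQ₄ : EQ * Qᵀ = EQ) :
    ∃ C > 0, ∃ ε₀ > 0, ∀ ε : ℝ, 0 < ε → ε < ε₀ →
      IsUnit (F₀ + ε • D) ∧
      ‖(F₀ + ε • D)⁻¹ -
        ((1 / ε) • EP + (1 - EP * D) * EQ * (1 - D * EP))‖ ≤ C * ε :=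
  stmt_5_general F₀ D P Q EP EQ hF₀sym hPproj hPsym hQ hker hEP₂ hEP₃ hEP₄ hEQ₂
end

section
/- Under the hypotheses of the singular perturbation lemma, if D = D₀ + D₁ with PᵀD₁ = 0 and D₁P = 0, then (F₀ + εD)^{-1} = (F₀ + εD₀)^{-1} + O(ε) as ε → 0. -/
open Matrix

attribute [local instance] Matrix.linftyOpNormedAddCommGroup Matrix.linftyOpNormedRing

attribute [local instance] Matrix.linftyOpNormedSpace

/-- Auxiliary: bound on `‖A⁻¹ - ε⁻¹ • EP‖` given the approximate-inverse identity. -/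
lemma aux_bound {n : ℕ} (F₀ Dg EP G : Matrix (Fin n) (Fin n) ℝ)
    (hkey : ∀ ε : ℝ, ε ≠ 0 → (F₀ + ε • Dg) * (ε⁻¹ • EP + G) = 1 + ε • (Dg * G))
    (ε : ℝ) (hε : 0 < ε) (hε1 : ε ≤ 1) (hsmall : ε * ‖Dg * G‖ ≤ 1 / 2)
    (hunit : IsUnit (F₀ + ε • Dg)) :
    ‖(F₀ + ε • Dg)⁻¹ - ε⁻¹ • EP‖ ≤ ‖G‖ + (‖EP‖ + ‖G‖) * ‖Dg * G‖ * 2 := by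
  rcases Nat.eq_zero_or_pos n with h0 | h0
  · subst h0
    have : ((F₀ + ε • Dg)⁻¹ - ε⁻¹ • EP) = 0 := Subsingleton.elim _ _
    rw [this, norm_zero]
    positivity
  haveI : Nonempty (Fin n) := ⟨⟨0, h0⟩⟩
  haveI : CompleteSpace (Matrix (Fin n) (Fin n) ℝ) := FiniteDimensional.complete ℝ _
  set A := F₀ + ε • Dg with hA
  set t := ε • (Dg * G) with ht
  have hεne : ε ≠ 0 := ne_of_gt hε
  have htn : ‖t‖ ≤ 1 / 2 := by
    rw [ht, norm_smul, Real.norm_eq_abs, abs_of_pos hε]; exact hsmall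
  have htlt : ‖(-t : Matrix (Fin n) (Fin n) ℝ)‖ < 1 := by
    rw [norm_neg]; linarith
  have hNunit : IsUnit (1 + t) := by
    have := (Units.oneSub (-t) htlt).isUnit
    simpa [sub_neg_eq_add] using this
  set N := (1 + t : Matrix (Fin n) (Fin n) ℝ) with hNdef
  have hNd : IsUnit N.det := (Matrix.isUnit_iff_isUnit_det N).mp hNunit
  have hAd : IsUnit A.det := (Matrix.isUnit_iff_isUnit_det A).mp hunit
  have hNN : N * N⁻¹ = 1 := Matrix.mul_nonsing_inv N hNd
  have hNN' : N⁻¹ * N = 1 := Matrix.nonsing_inv_mul N hNd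
  have hAA : A⁻¹ * A = 1 := Matrix.nonsing_inv_mul A hAd
  have hAA' : A * A⁻¹ = 1 := Matrix.mul_nonsing_inv A hAd
  -- bound on ‖N⁻¹‖
  have hNinv_eq : N⁻¹ = 1 - N⁻¹ * t := by
    have : N⁻¹ * (1 + t) = 1 := by rw [← hNdef]; exact hNN'
    rw [mul_add, mul_one] at this
    linear_combination (norm := module) this
  have hNinv_bound : ‖N⁻¹‖ ≤ 2 := by
    have h1 : ‖N⁻¹‖ ≤ ‖(1 : Matrix (Fin n) (Fin n) ℝ)‖ + ‖N⁻¹ * t‖ := by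
      calc ‖N⁻¹‖ = ‖1 - N⁻¹ * t‖ := by rw [← hNinv_eq]
        _ ≤ _ := norm_sub_le _ _
    have h2 : ‖N⁻¹ * t‖ ≤ ‖N⁻¹‖ * ‖t‖ := norm_mul_le _ _
    have h3 : ‖N⁻¹‖ * ‖t‖ ≤ ‖N⁻¹‖ * (1/2) := by
      apply mul_le_mul_of_nonneg_left htn (norm_nonneg _)
    have h4 : ‖(1 : Matrix (Fin n) (Fin n) ℝ)‖ = 1 := norm_one
    linarith
  -- A⁻¹ = X * N⁻¹
  set X := ε⁻¹ • EP + G with hX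
  have hAX : A * X = N := hkey ε hεne
  have hAinv : A⁻¹ = X * N⁻¹ := by
    have h1 : X = A⁻¹ * N := by
      rw [← hAX, ← Matrix.mul_assoc, hAA, Matrix.one_mul]
    rw [h1, Matrix.mul_assoc, hNN, Matrix.mul_one]
  -- expansion
  have hεX : ε • X = EP + ε • G := by
    rw [hX, smul_add, smul_smul, mul_inv_cancel₀ hεne, one_smul]
  have hexp : A⁻¹ - ε⁻¹ • EP = G - (EP + ε • G) * ((Dg * G) * N⁻¹) := by
    have h1 : A⁻¹ = X - X * (t * N⁻¹) := by
      rw [hAinv]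
      have h2 : N⁻¹ = 1 - t * N⁻¹ := by
        have : (1 + t) * N⁻¹ = 1 := by rw [← hNdef]; exact hNN
        rw [add_mul, one_mul] at this
        linear_combination (norm := module) this
      nth_rewrite 1 [h2]
      rw [mul_sub, mul_one]
    have h3 : X * (t * N⁻¹) = (EP + ε • G) * ((Dg * G) * N⁻¹) := by
      rw [ht, smul_mul_assoc, mul_smul_comm, ← smul_mul_assoc, hεX]
    rw [h1, h3, hX]
    abel
  rw [hexp]
  have hb1 : ‖(EP + ε • G) * ((Dg * G) * N⁻¹)‖ ≤ (‖EP‖ + ‖G‖) * (‖Dg * G‖ * 2) := by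
    calc ‖(EP + ε • G) * ((Dg * G) * N⁻¹)‖ ≤ ‖EP + ε • G‖ * ‖(Dg * G) * N⁻¹‖ := norm_mul_le _ _
      _ ≤ (‖EP‖ + ‖ε • G‖) * (‖Dg * G‖ * ‖N⁻¹‖) := by
          apply mul_le_mul (norm_add_le _ _) (norm_mul_le _ _) (norm_nonneg _)
          positivity
      _ ≤ (‖EP‖ + ‖G‖) * (‖Dg * G‖ * 2) := by
          apply mul_le_mul _ _ (by positivity) (by positivity)
          · have : ‖ε • G‖ = ε * ‖G‖ := by
              rw [norm_smul, Real.norm_eq_abs, abs_of_pos hε]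
            nlinarith [norm_nonneg G]
          · exact mul_le_mul_of_nonneg_left hNinv_bound (norm_nonneg _)
  calc ‖G - (EP + ε • G) * ((Dg * G) * N⁻¹)‖
      ≤ ‖G‖ + ‖(EP + ε • G) * ((Dg * G) * N⁻¹)‖ := norm_sub_le _ _
    _ ≤ ‖G‖ + (‖EP‖ + ‖G‖) * (‖Dg * G‖ * 2) := by linarith
    _ = ‖G‖ + (‖EP‖ + ‖G‖) * ‖Dg * G‖ * 2 := by ring

set_option maxHeartbeats 1000000 in
theorem aux_main {n : ℕ} (F₀ D D₀ D₁ P Q EP EQ : Matrix (Fin n) (Fin n) ℝ)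
    (ε₁ : ℝ) (hε₁pos : ε₁ > 0)
    (hinv' : ∀ ε : ℝ, 0 < ε → ε < ε₁ → IsUnit (F₀ + ε • D) ∧ IsUnit (F₀ + ε • D₀))
    (hEP4 : EP * Pᵀ = EP) (hEP3 : P * EP = EP)
    (hD₁left : Pᵀ * D₁ = 0) (hD₁right : D₁ * P = 0)
    (hD : D = D₀ + D₁)
    (hkeyD : ∀ ε : ℝ, ε ≠ 0 → (F₀ + ε • D) * (ε⁻¹ • EP + (EQ - EQ * (D * EP)))
        = 1 + ε • (D * (EQ - EQ * (D * EP))))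
    (hkeyD₀ : ∀ ε : ℝ, ε ≠ 0 → (F₀ + ε • D₀) * (ε⁻¹ • EP + (EQ - EQ * (D₀ * EP)))
        = 1 + ε • (D₀ * (EQ - EQ * (D₀ * EP)))) :
    ∃ C > 0, ∃ ε₀ > 0, ∀ ε : ℝ, 0 < ε → ε < ε₀ →
      ‖(F₀ + ε • D)⁻¹ - (F₀ + ε • D₀)⁻¹‖ ≤ C * ε := by
  have hEPD₁ : EP * D₁ = 0 := by
    rw [← hEP4, Matrix.mul_assoc, hD₁left, Matrix.mul_zero]
  have hD₁EP : D₁ * EP = 0 := by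
    rw [← hEP3, ← Matrix.mul_assoc, hD₁right, Matrix.zero_mul]
  set G : Matrix (Fin n) (Fin n) ℝ := EQ - EQ * (D * EP) with hG
  set G₀ : Matrix (Fin n) (Fin n) ℝ := EQ - EQ * (D₀ * EP) with hG₀
  obtain ⟨CA, hCAnn, hCAdef⟩ : ∃ CA : ℝ, 0 ≤ CA ∧ CA = ‖G‖ + (‖EP‖ + ‖G‖) * ‖D * G‖ * 2 :=
    ⟨_, by positivity, rfl⟩
  obtain ⟨CB, hCBnn, hCBdef⟩ : ∃ CB : ℝ, 0 ≤ CB ∧ CB = ‖G₀‖ + (‖EP‖ + ‖G₀‖) * ‖D₀ * G₀‖ * 2 :=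
    ⟨_, by positivity, rfl⟩
  obtain ⟨K, hKpos, hKdef⟩ : ∃ K : ℝ, 0 < K ∧ K = ‖D * G‖ + ‖D₀ * G₀‖ + 1 :=
    ⟨_, by positivity, rfl⟩
  have hCpos : (0:ℝ) < CA * ‖D₁‖ * CB + 1 := by
    have h := mul_nonneg (mul_nonneg hCAnn (norm_nonneg D₁)) hCBnn
    linarith
  refine ⟨CA * ‖D₁‖ * CB + 1, hCpos, min ε₁ (min 1 (1 / (2 * K))), ?_, ?_⟩
  · exact lt_min hε₁pos (lt_min one_pos (by positivity))
  intro ε hε hεlt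
  have hεε₁ : ε < ε₁ := lt_of_lt_of_le hεlt (min_le_left _ _)
  have hε1 : ε ≤ 1 := le_of_lt (lt_of_lt_of_le hεlt ((min_le_right _ _).trans (min_le_left _ _)))
  have hεK : ε < 1 / (2 * K) := lt_of_lt_of_le hεlt ((min_le_right _ _).trans (min_le_right _ _))
  have hεne : ε ≠ 0 := ne_of_gt hε
  obtain ⟨hAu, hBu⟩ := hinv' ε hε hεε₁
  have hεK2 : ε * K < 1 / 2 := by
    rw [lt_div_iff₀ (by positivity : (0:ℝ) < 2 * K)] at hεK
    linarith
  have hsmallD : ε * ‖D * G‖ ≤ 1 / 2 := by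
    rw [hKdef] at hεK2
    nlinarith [norm_nonneg (D * G), norm_nonneg (D₀ * G₀)]
  have hsmallD₀ : ε * ‖D₀ * G₀‖ ≤ 1 / 2 := by
    rw [hKdef] at hεK2
    nlinarith [norm_nonneg (D * G), norm_nonneg (D₀ * G₀)]
  have hRA : ‖(F₀ + ε • D)⁻¹ - ε⁻¹ • EP‖ ≤ CA := by
    rw [hCAdef]
    exact aux_bound F₀ D EP G hkeyD ε hε hε1 hsmallD hAu
  have hRB : ‖(F₀ + ε • D₀)⁻¹ - ε⁻¹ • EP‖ ≤ CB := by
    rw [hCBdef]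
    exact aux_bound F₀ D₀ EP G₀ hkeyD₀ ε hε hε1 hsmallD₀ hBu
  set A := F₀ + ε • D with hAdef
  set B := F₀ + ε • D₀ with hBdef
  set RA := A⁻¹ - ε⁻¹ • EP with hRAdef
  set RB := B⁻¹ - ε⁻¹ • EP with hRBdef
  have hAd : IsUnit A.det := (Matrix.isUnit_iff_isUnit_det A).mp hAu
  have hBd : IsUnit B.det := (Matrix.isUnit_iff_isUnit_det B).mp hBu
  have hAA : A⁻¹ * A = 1 := Matrix.nonsing_inv_mul A hAd
  have hBB : B * B⁻¹ = 1 := Matrix.mul_nonsing_inv B hBd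
  have hres : A⁻¹ - B⁻¹ = A⁻¹ * (B - A) * B⁻¹ := by
    rw [mul_sub, sub_mul, Matrix.mul_assoc, hBB, Matrix.mul_one, hAA, Matrix.one_mul]
  have hBA : B - A = -(ε • D₁) := by
    rw [hAdef, hBdef, hD]
    module
  have hAD₁ : A⁻¹ * D₁ = RA * D₁ := by
    have h : A⁻¹ = RA + ε⁻¹ • EP := by rw [hRAdef]; abel
    rw [h, add_mul, smul_mul_assoc, hEPD₁, smul_zero, add_zero]
  have hD₁B : D₁ * B⁻¹ = D₁ * RB := by
    have h : B⁻¹ = RB + ε⁻¹ • EP := by rw [hRBdef]; abel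
    rw [h, mul_add, mul_smul_comm, hD₁EP, smul_zero, add_zero]
  have hfinal : A⁻¹ - B⁻¹ = -(ε • (RA * (D₁ * RB))) := by
    rw [hres, hBA]
    rw [mul_neg, neg_mul, mul_smul_comm, smul_mul_assoc, hAD₁, Matrix.mul_assoc, hD₁B]
  rw [hfinal, norm_neg, norm_smul, Real.norm_eq_abs, abs_of_pos hε]
  have hb : ‖RA * (D₁ * RB)‖ ≤ CA * (‖D₁‖ * CB) := by
    calc ‖RA * (D₁ * RB)‖ ≤ ‖RA‖ * ‖D₁ * RB‖ := norm_mul_le _ _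
      _ ≤ ‖RA‖ * (‖D₁‖ * ‖RB‖) :=
          mul_le_mul_of_nonneg_left (norm_mul_le _ _) (norm_nonneg _)
      _ ≤ CA * (‖D₁‖ * CB) := by
          apply mul_le_mul hRA _ _ hCAnn
          · exact mul_le_mul_of_nonneg_left hRB (norm_nonneg _)
          · positivity
  have hDn : (0:ℝ) ≤ ‖D₁‖ := norm_nonneg _
  calc ε * ‖RA * (D₁ * RB)‖ ≤ ε * (CA * (‖D₁‖ * CB)) :=
        mul_le_mul_of_nonneg_left hb (le_of_lt hε)
    _ ≤ (CA * ‖D₁‖ * CB + 1) * ε := by nlinarith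

/-- If `D = D₀ + D₁` with `PᵀD₁ = 0` and `D₁P = 0` (where `P` is the orthogonal
projection onto `ker F₀`), then `(F₀ + εD)⁻¹ = (F₀ + εD₀)⁻¹ + O(ε)` as `ε → 0`. -/
theorem stmt_7 {n : ℕ} (F₀ D D₀ D₁ P Q : Matrix (Fin n) (Fin n) ℝ)
    (hF₀sym : F₀.IsSymm) (hF₀sing : ¬ IsUnit F₀)
    (hPproj : P * P = P) (hPsym : Pᵀ = P) (hQ : Q = 1 - P)
    (hker : ∀ x : Fin n → ℝ, F₀ *ᵥ x = 0 ↔ P *ᵥ x = x)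
    (hD : D = D₀ + D₁) (hD₁left : Pᵀ * D₁ = 0) (hD₁right : D₁ * P = 0)
    -- `PᵀD₀P` is invertible on the range of `P`:
    (hEP : ∃ EP : Matrix (Fin n) (Fin n) ℝ,
      EP * (Pᵀ * D₀ * P) = P ∧ (Pᵀ * D₀ * P) * EP = P ∧ P * EP = EP ∧ EP * Pᵀ = EP)
    -- `QᵀF₀Q` is invertible on the range of `Q`:
    (hEQ : ∃ EQ : Matrix (Fin n) (Fin n) ℝ,
      EQ * (Qᵀ * F₀ * Q) = Q ∧ (Qᵀ * F₀ * Q) * EQ = Q ∧ Q * EQ = EQ ∧ EQ * Qᵀ = EQ)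
    -- both `F₀ + εD` and `F₀ + εD₀` are invertible for all small `ε > 0`:
    (hinv : ∃ ε₁ > 0, ∀ ε : ℝ, 0 < ε → ε < ε₁ →
      IsUnit (F₀ + ε • D) ∧ IsUnit (F₀ + ε • D₀)) :
    ∃ C > 0, ∃ ε₀ > 0, ∀ ε : ℝ, 0 < ε → ε < ε₀ →
      ‖(F₀ + ε • D)⁻¹ - (F₀ + ε • D₀)⁻¹‖ ≤ C * ε := by
  obtain ⟨EP, hEP1, hEP2, hEP3, hEP4⟩ := hEP
  obtain ⟨EQ, hEQ1, hEQ2, hEQ3, hEQ4⟩ := hEQ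
  obtain ⟨ε₁, hε₁pos, hinv'⟩ := hinv
  -- basic algebraic facts
  have hFP : F₀ * P = 0 := by
    have h : ∀ x, (F₀ * P) *ᵥ x = 0 := by
      intro x
      rw [← Matrix.mulVec_mulVec]
      rw [hker]
      rw [Matrix.mulVec_mulVec, hPproj]
    ext i j
    have := congrFun (h (Pi.single j 1)) i
    simpa [Matrix.mulVec_single] using this
  have hF₀ : F₀ᵀ = F₀ := hF₀sym
  have hPF : P * F₀ = 0 := by
    have := congrArg Matrix.transpose hFP
    rwa [Matrix.transpose_mul, hPsym, hF₀, Matrix.transpose_zero] at this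
  have hQsym : Qᵀ = Q := by rw [hQ, Matrix.transpose_sub, Matrix.transpose_one, hPsym]
  have hPQ : P + Q = 1 := by rw [hQ]; abel
  have hQFQ : Qᵀ * F₀ * Q = F₀ := by
    rw [hQsym, hQ]
    simp [sub_mul, mul_sub, hPF, hFP]
  have hFEP : F₀ * EP = 0 := by rw [← hEP3, ← Matrix.mul_assoc, hFP, Matrix.zero_mul]
  have hFEQ : F₀ * EQ = Q := by
    have h := hEQ2
    rw [hQFQ] at h
    exact h
  have hPDEP : ∀ Dg : Matrix (Fin n) (Fin n) ℝ, Pᵀ * Dg * P = Pᵀ * D₀ * P →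
      P * (Dg * EP) = P := by
    intro Dg hg
    have h : Pᵀ * Dg * P * EP = P * (Dg * EP) := by
      rw [hPsym, Matrix.mul_assoc, hEP3, Matrix.mul_assoc]
    rw [← h, hg, hEP2]
  have hPD₀P : Pᵀ * D₀ * P = Pᵀ * D₀ * P := rfl
  have hPDP : Pᵀ * D * P = Pᵀ * D₀ * P := by
    rw [hD, mul_add, add_mul, hD₁left, Matrix.zero_mul, add_zero]
  -- key approximate-inverse identity
  have hkey : ∀ Dg : Matrix (Fin n) (Fin n) ℝ, P * (Dg * EP) = P →
      ∀ ε : ℝ, ε ≠ 0 → (F₀ + ε • Dg) * (ε⁻¹ • EP + (EQ - EQ * (Dg * EP)))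
        = 1 + ε • (Dg * (EQ - EQ * (Dg * EP))) := by
    intro Dg hPD ε hε
    have expand : (F₀ + ε • Dg) * (ε⁻¹ • EP + (EQ - EQ * (Dg * EP)))
        = ε⁻¹ • (F₀ * EP) + ((F₀ * EQ) - (F₀ * EQ) * (Dg * EP))
          + (ε * ε⁻¹) • (Dg * EP) + ε • (Dg * (EQ - EQ * (Dg * EP))) := by
      simp only [add_mul, mul_add, mul_sub, smul_mul_assoc, mul_smul_comm, smul_smul,
        Matrix.mul_assoc]
      module
    rw [expand, hFEP, hFEQ, mul_inv_cancel₀ hε, smul_zero, one_smul, zero_add]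
    have h1 : Dg * EP = P + Q * (Dg * EP) := by
      calc Dg * EP = (P + Q) * (Dg * EP) := by rw [hPQ, Matrix.one_mul]
        _ = P * (Dg * EP) + Q * (Dg * EP) := add_mul _ _ _
        _ = P + Q * (Dg * EP) := by rw [hPD]
    nth_rewrite 2 [h1]
    rw [← hPQ]
    abel
  exact aux_main F₀ D D₀ D₁ P Q EP EQ ε₁ hε₁pos hinv' hEP4 hEP3 hD₁left hD₁right hD
    (hkey D (hPDEP D hPDP)) (hkey D₀ (hPDEP D₀ hPD₀P))
end
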